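/- arXiv:1804.04303 — 3 statements merged into one kernel-verified Lean document; each statement's English description precedes it below -/
import Mathlib

section
/- Let α : A → B be a de Vries extension and F a round filter of A. Then ¬⋀ α[F] = ⋁ α[J], where J = {c ∈ A | ¬c ∈ F}. -/
/-!
By De Morgan the left side is `⋁_{b ∈ F} ¬α b`. Each `¬α b` lies below `α ¬a` for some `a ∈ F` with
`a ≺ b` (roundness, then `¬b ≺ ¬a` and M3), and `¬a ∈ J`. Conversely, for `c ∈ J` we have
`α c ≤ ¬α ¬c` because `α` preserves `⊥` and meets, and `¬c ∈ F`.
-/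

def IsAlphaCompact {A B : Type*} [CompleteBooleanAlgebra A] [CompleteBooleanAlgebra B]
    (α : A → B) (a : A) : Prop :=
  ∀ S : Set A, (α aᶜ)ᶜ ≤ sSup (α '' S) →
    ∃ T ⊆ S, T.Finite ∧ (α aᶜ)ᶜ ≤ sSup (α '' T)

theorem map_le_compl_map_compl {A B : Type*} [BooleanAlgebra A] [BooleanAlgebra B] {α : A → B}
    (map_bot : α ⊥ = ⊥) (map_inf : ∀ a b : A, α (a ⊓ b) = α a ⊓ α b) (c : A) :
    α c ≤ (α cᶜ)ᶜ := by
  rw [le_compl_iff_disjoint_right, disjoint_iff, ← map_inf, inf_compl_eq_bot, map_bot]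

theorem compl_map_le_map_compl_of_prec {A B : Type*} [BooleanAlgebra A] [BooleanAlgebra B]
    {prec : A → A → Prop} {α : A → B} (prec_compl : ∀ a b : A, prec a b → prec bᶜ aᶜ)
    (compl_map_compl_le : ∀ a b : A, prec a b → (α aᶜ)ᶜ ≤ α b) {a b : A} (hab : prec a b) :
    (α b)ᶜ ≤ α aᶜ := by
  simpa using compl_map_compl_le _ _ (prec_compl a b hab)

theorem stmt7_general {A B : Type*} [CompleteBooleanAlgebra A] [CompleteBooleanAlgebra B]
    (prec : A → A → Prop) (α : A → B)
    (dv5 : ∀ a b : A, prec a b → prec bᶜ aᶜ)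
    (m1 : α ⊥ = ⊥)
    (m2 : ∀ a b : A, α (a ⊓ b) = α a ⊓ α b)
    (m3 : ∀ a b : A, prec a b → (α aᶜ)ᶜ ≤ α b)
    (F : Set A)
    (hFround : ∀ b ∈ F, ∃ a ∈ F, prec a b) :
    (sInf (α '' F))ᶜ = sSup (α '' {c : A | cᶜ ∈ F}) := by
  rw [compl_sInf, iSup_image, sSup_image]
  apply le_antisymm
  · refine iSup₂_le fun b hb => ?_
    obtain ⟨a, ha, hab⟩ := hFround b hb
    have haF : aᶜ ∈ {c : A | cᶜ ∈ F} := by simpa using ha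
    exact (compl_map_le_map_compl_of_prec dv5 m3 hab).trans (le_biSup α haF)
  · exact iSup₂_le fun c hc =>
      (map_le_compl_map_compl m1 m2 c).trans (le_biSup (fun b => (α b)ᶜ) hc)

theorem stmt7 {A B : Type*} [CompleteBooleanAlgebra A] [CompleteBooleanAlgebra B]
    [IsAtomic B] (prec : A → A → Prop) (α : A → B)
    (dv1 : prec ⊤ ⊤)
    (dv2 : ∀ a b : A, prec a b → a ≤ b)
    (dv3 : ∀ a b c d : A, a ≤ b → prec b c → c ≤ d → prec a d)
    (dv4 : ∀ a b c : A, prec a b → prec a c → prec a (b ⊓ c))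
    (dv5 : ∀ a b : A, prec a b → prec bᶜ aᶜ)
    (dv6 : ∀ a b : A, prec a b → ∃ c, prec a c ∧ prec c b)
    (dv7 : ∀ b : A, b = sSup {a : A | prec a b})
    (hinj : Function.Injective α)
    (m1 : α ⊥ = ⊥)
    (m2 : ∀ a b : A, α (a ⊓ b) = α a ⊓ α b)
    (m3 : ∀ a b : A, prec a b → (α aᶜ)ᶜ ≤ α b)
    (m4 : ∀ b : A, α b = sSup (α '' {a : A | prec a b}))
    (hdense : ∀ y : B, ∃ T : Set (Set A), y = sSup ((fun S => sInf (α '' S)) '' T))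
    (F : Set A)
    (hFfil : F.Nonempty ∧ (∀ a b : A, a ∈ F → a ≤ b → b ∈ F) ∧
      (∀ a b : A, a ∈ F → b ∈ F → a ⊓ b ∈ F))
    (hFround : ∀ b ∈ F, ∃ a ∈ F, prec a b) :
    (sInf (α '' F))ᶜ = sSup (α '' {c : A | cᶜ ∈ F}) :=
  stmt7_general prec α dv5 m1 m2 m3 F hFround
end

section
/- Let α : A → B be a de Vries extension such that 1 ∈ I_α (i.e., 1 is α-compact). Then α is compact: for every round filter F and round ideal I of A with ⋀ α[F] ≤ ⋁ α[I], we have F ∩ I ≠ ∅. -/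
section BooleanAlgebra

variable {A : Type*} [CompleteBooleanAlgebra A]

lemma exists_sSup_le_sup_compl_of_subset_union {F I T : Set A}
    (hFinf : InfClosed F) (htop : ⊤ ∈ F) (hIsup : SupClosed I) (hbot : ⊥ ∈ I)
    (hT : T.Finite) (hTS : T ⊆ I ∪ compl '' F) :
    ∃ i ∈ I, ∃ c ∈ F, sSup T ≤ i ⊔ cᶜ := by
  refine ⟨sSup (T ∩ I), hIsup.sSup_mem (hT.inter_of_left I) hbot Set.inter_subset_right,
    sInf (compl '' (T \ I)), hFinf.sInf_mem (hT.sdiff.image compl) htop ?_, ?_⟩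
  · rintro _ ⟨x, ⟨hxT, hxI⟩, rfl⟩
    obtain ⟨b, hb, rfl⟩ := (hTS hxT).resolve_left hxI
    simpa using hb
  · refine sSup_le fun x hxT => ?_
    by_cases hxI : x ∈ I
    · exact le_sup_of_le_left (le_sSup ⟨hxT, hxI⟩)
    · exact le_sup_of_le_right (le_compl_comm.mp (sInf_le ⟨x, ⟨hxT, hxI⟩, rfl⟩))

end BooleanAlgebra

section DeVriesMorphism

variable {A B : Type*} [CompleteBooleanAlgebra A] [CompleteBooleanAlgebra B] {α : A → B}

lemma monotone_of_map_inf (hinf : ∀ a b : A, α (a ⊓ b) = α a ⊓ α b) : Monotone α := by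
  intro a b hab
  rw [← inf_eq_left.mpr hab, hinf]
  exact inf_le_right

lemma eq_top_of_map_eq_top (hinj : Function.Injective α) (hmono : Monotone α) {a : A}
    (ha : α a = ⊤) : a = ⊤ :=
  hinj (le_antisymm (hmono le_top) (ha ▸ le_top))

lemma IsAlphaCompact.exists_finite_top_le (htop : IsAlphaCompact α (⊤ : A)) (hbot : α ⊥ = ⊥)
    {S : Set A} (hS : ⊤ ≤ sSup (α '' S)) :
    ∃ T ⊆ S, T.Finite ∧ ⊤ ≤ sSup (α '' T) := by
  simpa [hbot] using htop S (by simpa [hbot] using hS)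

lemma compl_sInf_image_le_sSup_image_compl {prec : A → A → Prop}
    (hcompl : ∀ a b : A, prec a b → prec bᶜ aᶜ)
    (hprec : ∀ a b : A, prec a b → (α aᶜ)ᶜ ≤ α b)
    {F : Set A} (hFround : ∀ b ∈ F, ∃ a ∈ F, prec a b) :
    (sInf (α '' F))ᶜ ≤ sSup (α '' (compl '' F)) := by
  rw [compl_sInf]
  refine iSup₂_le ?_
  rintro _ ⟨b, hb, rfl⟩
  obtain ⟨a, ha, hab⟩ := hFround b hb
  calc (α b)ᶜ ≤ α aᶜ := by simpa using hprec _ _ (hcompl a b hab)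
    _ ≤ sSup (α '' (compl '' F)) := le_sSup ⟨aᶜ, ⟨a, ha, rfl⟩, rfl⟩

lemma top_le_sSup_image_union_compl {prec : A → A → Prop}
    (hcompl : ∀ a b : A, prec a b → prec bᶜ aᶜ)
    (hprec : ∀ a b : A, prec a b → (α aᶜ)ᶜ ≤ α b)
    {F I : Set A} (hFround : ∀ b ∈ F, ∃ a ∈ F, prec a b)
    (hle : sInf (α '' F) ≤ sSup (α '' I)) :
    ⊤ ≤ sSup (α '' (I ∪ compl '' F)) := by
  rw [Set.image_union, sSup_union, ← compl_sup_eq_top (x := sInf (α '' F))]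
  exact sup_le (le_sup_of_le_right (compl_sInf_image_le_sSup_image_compl hcompl hprec hFround))
    (le_sup_of_le_left hle)

end DeVriesMorphism

theorem stmt8_general {A B : Type*} [CompleteBooleanAlgebra A] [CompleteBooleanAlgebra B]
    (prec : A → A → Prop) (α : A → B)
    (dv5 : ∀ a b : A, prec a b → prec bᶜ aᶜ)
    (hinj : Function.Injective α)
    (m1 : α ⊥ = ⊥)
    (m2 : ∀ a b : A, α (a ⊓ b) = α a ⊓ α b)
    (m3 : ∀ a b : A, prec a b → (α aᶜ)ᶜ ≤ α b)
    (htop : IsAlphaCompact α (⊤ : A)) :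
    ∀ F I : Set A,
      (F.Nonempty ∧ (∀ a b : A, a ∈ F → a ≤ b → b ∈ F) ∧ (∀ a b : A, a ∈ F → b ∈ F → a ⊓ b ∈ F)) →
      (∀ b ∈ F, ∃ a ∈ F, prec a b) →
      (I.Nonempty ∧ (∀ a b : A, b ∈ I → a ≤ b → a ∈ I) ∧ (∀ a b : A, a ∈ I → b ∈ I → a ⊔ b ∈ I)) →
      (∀ a ∈ I, ∃ b ∈ I, prec a b) →
      sInf (α '' F) ≤ sSup (α '' I) → (F ∩ I).Nonempty := by
  rintro F I ⟨hFne, hFup, hFinf⟩ hFround ⟨hIne, hIdown, hIsup⟩ - hle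
  have hFupper : IsUpperSet F := fun a b hab ha => hFup a b ha hab
  have hIlower : IsLowerSet I := fun a b hba ha => hIdown b a ha hba
  have hmono := monotone_of_map_inf m2
  obtain ⟨T, hTS, hT, hTtop⟩ :=
    htop.exists_finite_top_le m1 (top_le_sSup_image_union_compl dv5 m3 hFround hle)
  obtain ⟨i, hi, c, hc, hTic⟩ := exists_sSup_le_sup_compl_of_subset_union
    (fun a ha b hb => hFinf a b ha hb) (hFupper.top_mem.mpr hFne)
    (fun a ha b hb => hIsup a b ha hb) (hIlower.bot_mem.mpr hIne) hT hTS
  have hcover : i ⊔ cᶜ = ⊤ := eq_top_of_map_eq_top hinj hmono <|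
    top_le_iff.mp (hTtop.trans (sSup_image.trans_le (hmono.le_map_sSup.trans (hmono hTic))))
  have hci : c ≤ i := by
    simpa using codisjoint_iff_compl_le_left.mp (codisjoint_iff.mpr hcover)
  exact ⟨i, hFup c i hc hci, hi⟩

theorem stmt8 {A B : Type*} [CompleteBooleanAlgebra A] [CompleteBooleanAlgebra B]
    [IsAtomic B] (prec : A → A → Prop) (α : A → B)
    (dv1 : prec ⊤ ⊤)
    (dv2 : ∀ a b : A, prec a b → a ≤ b)
    (dv3 : ∀ a b c d : A, a ≤ b → prec b c → c ≤ d → prec a d)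
    (dv4 : ∀ a b c : A, prec a b → prec a c → prec a (b ⊓ c))
    (dv5 : ∀ a b : A, prec a b → prec bᶜ aᶜ)
    (dv6 : ∀ a b : A, prec a b → ∃ c, prec a c ∧ prec c b)
    (dv7 : ∀ b : A, b = sSup {a : A | prec a b})
    (hinj : Function.Injective α)
    (m1 : α ⊥ = ⊥)
    (m2 : ∀ a b : A, α (a ⊓ b) = α a ⊓ α b)
    (m3 : ∀ a b : A, prec a b → (α aᶜ)ᶜ ≤ α b)
    (m4 : ∀ b : A, α b = sSup (α '' {a : A | prec a b}))
    (hdense : ∀ y : B, ∃ T : Set (Set A), y = sSup ((fun S => sInf (α '' S)) '' T))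
    (htop : IsAlphaCompact α (⊤ : A)) :
    ∀ F I : Set A,
      (F.Nonempty ∧ (∀ a b : A, a ∈ F → a ≤ b → b ∈ F) ∧ (∀ a b : A, a ∈ F → b ∈ F → a ⊓ b ∈ F)) →
      (∀ b ∈ F, ∃ a ∈ F, prec a b) →
      (I.Nonempty ∧ (∀ a b : A, b ∈ I → a ≤ b → a ∈ I) ∧ (∀ a b : A, a ∈ I → b ∈ I → a ⊔ b ∈ I)) →
      (∀ a ∈ I, ∃ b ∈ I, prec a b) →
      sInf (α '' F) ≤ sSup (α '' I) → (F ∩ I).Nonempty :=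
  stmt8_general prec α dv5 hinj m1 m2 m3 htop
end

section
/- Let α : A → B be a locally compact de Vries extension and define a ◁ b iff (a ∧ c) ≺ (b ∨ ¬c) for all c ∈ I_α. Then ◁ satisfies axioms (DV1)–(DV5) and I_α satisfies axioms (I1)–(I3), so (A, ◁, I_α) is a Dimov algebra. -/
section

variable {A B : Type*} [CompleteBooleanAlgebra A] [CompleteBooleanAlgebra B]
  {prec : A → A → Prop} {α : A → B} {a b d : A}

/-- Axioms (DV1)–(DV5). -/
structure IsDVRelation (prec : A → A → Prop) : Prop where
  top_top : prec ⊤ ⊤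
  le {a b : A} : prec a b → a ≤ b
  mono {a b c d : A} : a ≤ b → prec b c → c ≤ d → prec a d
  inf_right {a b c : A} : prec a b → prec a c → prec a (b ⊓ c)
  compl {a b : A} : prec a b → prec bᶜ aᶜ

/-- An injective de Vries morphism, (M1)–(M4), into a Boolean algebra whose proximity is `≤`. -/
structure IsDVEmbedding (prec : A → A → Prop) (α : A → B) : Prop where
  injective : Function.Injective α
  map_bot : α ⊥ = ⊥
  map_inf (a b : A) : α (a ⊓ b) = α a ⊓ α b
  compl_map_compl_le {a b : A} : prec a b → (α aᶜ)ᶜ ≤ α b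
  map_eq_sSup (b : A) : α b = sSup (α '' {a | prec a b})

/-- The relation `◁`. -/
def DimovPrec (prec : A → A → Prop) (α : A → B) (a b : A) : Prop :=
  ∀ c, IsAlphaCompact α c → prec (a ⊓ c) (b ⊔ cᶜ)

namespace IsDVRelation

theorem bot_left (hp : IsDVRelation prec) (d : A) : prec ⊥ d :=
  hp.mono bot_le (by simpa using hp.compl hp.top_top) bot_le

theorem sup_left (hp : IsDVRelation prec) {x y : A} (hx : prec x d) (hy : prec y d) :
    prec (x ⊔ y) d := by
  simpa using hp.compl (hp.inf_right (hp.compl hx) (hp.compl hy))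

theorem supClosed_setOf_left (hp : IsDVRelation prec) (d : A) : SupClosed {a | prec a d} :=
  fun _ hx _ hy => hp.sup_left hx hy

end IsDVRelation

namespace IsDVEmbedding

theorem monotone (hα : IsDVEmbedding prec α) : Monotone α :=
  Monotone.of_map_inf hα.map_inf

theorem map_le_map_iff (hα : IsDVEmbedding prec α) : α a ≤ α b ↔ a ≤ b := by
  refine ⟨fun h => inf_eq_left.1 (hα.injective ?_), fun h => hα.monotone h⟩
  rw [hα.map_inf, inf_eq_left.2 h]

theorem map_le_compl_map_compl (hα : IsDVEmbedding prec α) (a : A) : α a ≤ (α aᶜ)ᶜ :=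
  le_compl_iff_disjoint_right.2 <| disjoint_iff.2 <| by
    rw [← hα.map_inf, inf_compl_eq_bot, hα.map_bot]

theorem map_top (hα : IsDVEmbedding prec α) (hp : IsDVRelation prec) : α ⊤ = ⊤ :=
  top_unique <| by simpa [hα.map_bot] using hα.compl_map_compl_le hp.top_top

end IsDVEmbedding

namespace IsAlphaCompact

theorem bot (hα : α ⊤ = ⊤) : IsAlphaCompact α ⊥ :=
  fun S _ => ⟨∅, Set.empty_subset S, Set.finite_empty, by simp [hα]⟩

theorem sup (hα : ∀ a b, α (a ⊓ b) = α a ⊓ α b) {x y : A} (hx : IsAlphaCompact α x)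
    (hy : IsAlphaCompact α y) : IsAlphaCompact α (x ⊔ y) := by
  have hxy : (α (x ⊔ y)ᶜ)ᶜ = (α xᶜ)ᶜ ⊔ (α yᶜ)ᶜ := by rw [compl_sup, hα, compl_inf]
  intro S hS
  rw [hxy] at hS ⊢
  obtain ⟨T₁, hT₁S, hT₁, h₁⟩ := hx S (le_sup_left.trans hS)
  obtain ⟨T₂, hT₂S, hT₂, h₂⟩ := hy S (le_sup_right.trans hS)
  refine ⟨T₁ ∪ T₂, Set.union_subset hT₁S hT₂S, hT₁.union hT₂, ?_⟩
  rw [Set.image_union, sSup_union]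
  exact sup_le_sup h₁ h₂

theorem supClosed_setOf (hα : ∀ a b, α (a ⊓ b) = α a ⊓ α b) :
    SupClosed {a | IsAlphaCompact α a} :=
  fun _ hx _ hy => hx.sup hα hy

theorem exists_mem_le (hmono : Monotone α) (ha : IsAlphaCompact α a) {S : Set A}
    (hS : SupClosed S) (hbot : ⊥ ∈ S) (hcover : (α aᶜ)ᶜ ≤ sSup (α '' S)) :
    ∃ c ∈ S, (α aᶜ)ᶜ ≤ α c := by
  obtain ⟨T, hTS, hT, hle⟩ := ha S hcover
  refine ⟨sSup T, hS.sSup_mem hT hbot hTS, hle.trans ?_⟩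
  rw [sSup_image]
  exact hmono.le_map_sSup

end IsAlphaCompact

def IsLocallyCompact (prec : A → A → Prop) (α : A → B) : Prop :=
  ∀ b, α b = sSup (α '' {a | IsAlphaCompact α a ∧ prec a b})

theorem supClosed_compact_prec (hp : IsDVRelation prec) (hα : IsDVEmbedding prec α) (d : A) :
    SupClosed {a | IsAlphaCompact α a ∧ prec a d} :=
  (IsAlphaCompact.supClosed_setOf hα.map_inf).inter (hp.supClosed_setOf_left d)

theorem bot_mem_compact_prec (hp : IsDVRelation prec) (hα : IsDVEmbedding prec α) (d : A) :
    ⊥ ∈ {a | IsAlphaCompact α a ∧ prec a d} :=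
  ⟨IsAlphaCompact.bot (hα.map_top hp), hp.bot_left d⟩

theorem prec_of_compl_map_compl_le (hp : IsDVRelation prec) (hα : IsDVEmbedding prec α)
    (ha : IsAlphaCompact α a) (h : (α aᶜ)ᶜ ≤ α b) : prec a b := by
  rw [hα.map_eq_sSup b] at h
  obtain ⟨x, hxb, hx⟩ := ha.exists_mem_le hα.monotone (hp.supClosed_setOf_left b) (hp.bot_left b) h
  exact hp.mono (hα.map_le_map_iff.1 ((hα.map_le_compl_map_compl a).trans hx)) hxb le_rfl

theorem exists_compact_prec_compl_map_compl_le (hp : IsDVRelation prec)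
    (hα : IsDVEmbedding prec α) (hlc : IsLocallyCompact prec α) (ha : IsAlphaCompact α a)
    (h : (α aᶜ)ᶜ ≤ α b) : ∃ c, (IsAlphaCompact α c ∧ prec c b) ∧ (α aᶜ)ᶜ ≤ α c := by
  rw [hlc b] at h
  exact ha.exists_mem_le hα.monotone (supClosed_compact_prec hp hα b)
    (bot_mem_compact_prec hp hα b) h

namespace DimovPrec

theorem of_prec (hp : IsDVRelation prec) (h : prec a b) : DimovPrec prec α a b :=
  fun _ _ => hp.mono inf_le_left h le_sup_left

theorem mono (hp : IsDVRelation prec) {a b c d : A} (hab : a ≤ b) (h : DimovPrec prec α b c)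
    (hcd : c ≤ d) : DimovPrec prec α a d :=
  fun e he => hp.mono (inf_le_inf_right e hab) (h e he) (sup_le_sup_right hcd _)

theorem compl_map_compl_le (hp : IsDVRelation prec) (hα : IsDVEmbedding prec α)
    (hlc : IsLocallyCompact prec α) (ha : IsAlphaCompact α a) (h : DimovPrec prec α a b) :
    (α aᶜ)ᶜ ≤ α b := by
  obtain ⟨e, ⟨he, -⟩, hae⟩ :=
    exists_compact_prec_compl_map_compl_le hp hα hlc ha (b := ⊤) (by simp [hα.map_top hp])
  have hle : a ≤ e := hα.map_le_map_iff.1 ((hα.map_le_compl_map_compl a).trans hae)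
  have hprec := hα.compl_map_compl_le (h e he)
  rw [inf_eq_left.2 hle] at hprec
  calc (α aᶜ)ᶜ ≤ α ((b ⊔ eᶜ) ⊓ e) := by rw [hα.map_inf]; exact le_inf hprec hae
    _ ≤ α b := hα.monotone (by rw [inf_sup_right, compl_inf_self, sup_bot_eq]; exact inf_le_left)

end DimovPrec

theorem dimovPrec_iff_prec (hp : IsDVRelation prec) (hα : IsDVEmbedding prec α)
    (hlc : IsLocallyCompact prec α) (ha : IsAlphaCompact α a) :
    DimovPrec prec α a b ↔ prec a b :=
  ⟨fun h => prec_of_compl_map_compl_le hp hα ha (h.compl_map_compl_le hp hα hlc ha),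
    DimovPrec.of_prec hp⟩

theorem isDVRelation_dimovPrec (hp : IsDVRelation prec) (hα : IsDVEmbedding prec α)
    (hlc : IsLocallyCompact prec α) : IsDVRelation (DimovPrec prec α) where
  top_top := .of_prec hp hp.top_top
  le {a b} h := by
    refine hα.map_le_map_iff.1 ?_
    rw [hlc a]
    refine sSup_le ?_
    rintro _ ⟨k, ⟨hk, hka⟩, rfl⟩
    exact hα.monotone <| hp.le <|
      (dimovPrec_iff_prec hp hα hlc hk).1 (h.mono hp (hp.le hka) le_rfl)
  mono := DimovPrec.mono hp
  inf_right h₁ h₂ e he := hp.mono le_rfl (hp.inf_right (h₁ e he) (h₂ e he)) (sup_inf_right _ _ _).ge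
  compl h c hc := by simpa [inf_comm] using hp.compl (h c hc)

theorem exists_isAlphaCompact_dimovPrec_dimovPrec (hp : IsDVRelation prec)
    (hα : IsDVEmbedding prec α) (hlc : IsLocallyCompact prec α) (ha : IsAlphaCompact α a)
    (h : DimovPrec prec α a b) :
    ∃ c, IsAlphaCompact α c ∧ DimovPrec prec α a c ∧ DimovPrec prec α c b := by
  obtain ⟨c, ⟨hc, hcb⟩, hac⟩ := exists_compact_prec_compl_map_compl_le hp hα hlc ha
    (h.compl_map_compl_le hp hα hlc ha)
  exact ⟨c, hc, .of_prec hp (prec_of_compl_map_compl_le hp hα ha hac), .of_prec hp hcb⟩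

theorem dimovPrec_of_forall_isAlphaCompact
    (h : ∀ c, IsAlphaCompact α c → DimovPrec prec α (a ⊓ c) (b ⊔ cᶜ)) :
    DimovPrec prec α a b :=
  fun c hc => by simpa [inf_assoc, sup_assoc] using h c hc c hc

theorem exists_ne_bot_isAlphaCompact_dimovPrec (hp : IsDVRelation prec)
    (hα : IsDVEmbedding prec α) (hlc : IsLocallyCompact prec α) (hb : b ≠ ⊥) :
    ∃ a, a ≠ ⊥ ∧ IsAlphaCompact α a ∧ DimovPrec prec α a b := by
  by_contra! h
  refine hb (hα.injective ?_)
  rw [hα.map_bot, hlc b, sSup_eq_bot]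
  rintro _ ⟨k, ⟨hk, hkb⟩, rfl⟩
  obtain rfl : k = ⊥ := by_contra fun hk₀ => h k hk₀ hk (.of_prec hp hkb)
  exact hα.map_bot

end

theorem stmt14_general {A B : Type*} [CompleteBooleanAlgebra A] [CompleteBooleanAlgebra B]
    (prec : A → A → Prop) (α : A → B)
    (dv1 : prec ⊤ ⊤)
    (dv2 : ∀ a b : A, prec a b → a ≤ b)
    (dv3 : ∀ a b c d : A, a ≤ b → prec b c → c ≤ d → prec a d)
    (dv4 : ∀ a b c : A, prec a b → prec a c → prec a (b ⊓ c))
    (dv5 : ∀ a b : A, prec a b → prec bᶜ aᶜ)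
    (hinj : Function.Injective α)
    (m1 : α ⊥ = ⊥)
    (m2 : ∀ a b : A, α (a ⊓ b) = α a ⊓ α b)
    (m3 : ∀ a b : A, prec a b → (α aᶜ)ᶜ ≤ α b)
    (m4 : ∀ b : A, α b = sSup (α '' {a : A | prec a b}))
    (hlc : ∀ b : A, α b = sSup (α '' {a : A | IsAlphaCompact α a ∧ prec a b}))
    (lhd : A → A → Prop)
    (hlhd : ∀ a b : A, lhd a b ↔ ∀ c : A, IsAlphaCompact α c → prec (a ⊓ c) (b ⊔ cᶜ)) :
    lhd ⊤ ⊤ ∧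
    (∀ a b : A, lhd a b → a ≤ b) ∧
    (∀ a b c d : A, a ≤ b → lhd b c → c ≤ d → lhd a d) ∧
    (∀ a b c : A, lhd a b → lhd a c → lhd a (b ⊓ c)) ∧
    (∀ a b : A, lhd a b → lhd bᶜ aᶜ) ∧
    (∀ a b : A, IsAlphaCompact α a → lhd a b →
      ∃ c : A, IsAlphaCompact α c ∧ lhd a c ∧ lhd c b) ∧
    (∀ a b : A, (∀ c : A, IsAlphaCompact α c → lhd (a ⊓ c) (b ⊔ cᶜ)) → lhd a b) ∧
    (∀ b : A, b ≠ ⊥ → ∃ a : A, a ≠ ⊥ ∧ IsAlphaCompact α a ∧ lhd a b) := by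
  obtain rfl : lhd = DimovPrec prec α := funext₂ fun a b => propext (hlhd a b)
  have hp : IsDVRelation prec := ⟨dv1, dv2 _ _, dv3 _ _ _ _, dv4 _ _ _, dv5 _ _⟩
  have hα : IsDVEmbedding prec α := ⟨hinj, m1, m2, m3 _ _, m4⟩
  have hd : IsDVRelation (DimovPrec prec α) := isDVRelation_dimovPrec hp hα hlc
  exact ⟨hd.top_top, fun _ _ => hd.le, fun _ _ _ _ => hd.mono, fun _ _ _ => hd.inf_right,
    fun _ _ => hd.compl, fun _ _ => exists_isAlphaCompact_dimovPrec_dimovPrec hp hα hlc,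
    fun _ _ => dimovPrec_of_forall_isAlphaCompact,
    fun _ => exists_ne_bot_isAlphaCompact_dimovPrec hp hα hlc⟩

theorem stmt14 {A B : Type*} [CompleteBooleanAlgebra A] [CompleteBooleanAlgebra B]
    [IsAtomic B] (prec : A → A → Prop) (α : A → B)
    (dv1 : prec ⊤ ⊤)
    (dv2 : ∀ a b : A, prec a b → a ≤ b)
    (dv3 : ∀ a b c d : A, a ≤ b → prec b c → c ≤ d → prec a d)
    (dv4 : ∀ a b c : A, prec a b → prec a c → prec a (b ⊓ c))
    (dv5 : ∀ a b : A, prec a b → prec bᶜ aᶜ)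
    (dv6 : ∀ a b : A, prec a b → ∃ c, prec a c ∧ prec c b)
    (dv7 : ∀ b : A, b = sSup {a : A | prec a b})
    (hinj : Function.Injective α)
    (m1 : α ⊥ = ⊥)
    (m2 : ∀ a b : A, α (a ⊓ b) = α a ⊓ α b)
    (m3 : ∀ a b : A, prec a b → (α aᶜ)ᶜ ≤ α b)
    (m4 : ∀ b : A, α b = sSup (α '' {a : A | prec a b}))
    (hdense : ∀ y : B, ∃ T : Set (Set A), y = sSup ((fun S => sInf (α '' S)) '' T))
    (hlc : ∀ b : A, α b = sSup (α '' {a : A | IsAlphaCompact α a ∧ prec a b}))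
    (lhd : A → A → Prop)
    (hlhd : ∀ a b : A, lhd a b ↔ ∀ c : A, IsAlphaCompact α c → prec (a ⊓ c) (b ⊔ cᶜ)) :
    lhd ⊤ ⊤ ∧
    (∀ a b : A, lhd a b → a ≤ b) ∧
    (∀ a b c d : A, a ≤ b → lhd b c → c ≤ d → lhd a d) ∧
    (∀ a b c : A, lhd a b → lhd a c → lhd a (b ⊓ c)) ∧
    (∀ a b : A, lhd a b → lhd bᶜ aᶜ) ∧
    (∀ a b : A, IsAlphaCompact α a → lhd a b →
      ∃ c : A, IsAlphaCompact α c ∧ lhd a c ∧ lhd c b) ∧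
    (∀ a b : A, (∀ c : A, IsAlphaCompact α c → lhd (a ⊓ c) (b ⊔ cᶜ)) → lhd a b) ∧
    (∀ b : A, b ≠ ⊥ → ∃ a : A, a ≠ ⊥ ∧ IsAlphaCompact α a ∧ lhd a b) :=
  stmt14_general prec α dv1 dv2 dv3 dv4 dv5 hinj m1 m2 m3 m4 hlc lhd hlhd
end
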